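/- arXiv:2205.06977 — 3 statements merged into one kernel-verified Lean document; each statement's English description precedes it below -/
import Mathlib

section
/- Let p_1, ..., p_n be distinct primes and d ≥ 2. The d^n real numbers φ(j) := (∏_{k=1}^n p_k^{j_k})^{1/d}, for j ∈ {0,...,d-1}^n, are linearly independent over Q. -/
open scoped BigOperators
open Polynomial IntermediateField

/-- If `β > 0` is real with `β ^ d` rational and `β` has minimal polynomial of degree ≥ 2,
then the next coefficient of its minimal polynomial vanishes. -/
private lemma aux_nextCoeff_zero {β : ℝ} (hβ : 0 < β) {d : ℕ} (hd : 0 < d) {c : ℚ}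
    (hc : β ^ d = (c : ℝ)) (h2 : 2 ≤ (minpoly ℚ β).natDegree) :
    (minpoly ℚ β).nextCoeff = 0 := by
  have hc0 : (0 : ℝ) < (c : ℝ) := hc ▸ pow_pos hβ d
  have hint : IsIntegral ℚ β :=
    ⟨X ^ d - C c, monic_X_pow_sub_C c hd.ne', by simp [hc]⟩
  set f := minpoly ℚ β with hf
  have hmon : f.Monic := minpoly.monic hint
  have hdvd : f ∣ X ^ d - C c := minpoly.dvd ℚ β (by simp [hc])
  set e := f.natDegree with he
  have hsp : Splits (f.map (algebraMap ℚ ℂ)) := IsAlgClosed.splits _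
  set R := (f.map (algebraMap ℚ ℂ)).roots with hR
  have hcard : Multiset.card R = e := hsp.natDegree_eq_card_roots.symm.trans (natDegree_map (algebraMap ℚ ℂ))
  have habs : ∀ z ∈ R, ‖z‖ = β := by
    intro z hz
    have hz0 : (Polynomial.aeval z) f = 0 := by
      rw [aeval_def, ← eval_map]
      exact (isRoot_of_mem_roots hz)
    have hz2 : z ^ d = ((c : ℚ) : ℂ) := by
      have h3 : (Polynomial.aeval z) (X ^ d - C c) = 0 :=
        aeval_eq_zero_of_dvd_aeval_eq_zero hdvd hz0
      simpa [sub_eq_zero] using h3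
    have habs' : ‖z‖ ^ d = β ^ d := by
      rw [← norm_pow, hz2, hc]
      have : ((c : ℚ) : ℂ) = (((c : ℚ) : ℝ) : ℂ) := by push_cast; ring
      rw [this, Complex.norm_real, Real.norm_eq_abs, abs_of_pos hc0, ← hc]
    exact (pow_left_inj₀ (norm_nonneg z) hβ.le hd.ne').mp habs'
  have heq : f.map (algebraMap ℚ ℂ) = (R.map fun a => X - C a).prod :=
    hsp.eq_prod_roots_of_monic (hmon.map _)
  have h0 : algebraMap ℚ ℂ (f.coeff 0) = (R.map fun a => -a).prod := by
    rw [← coeff_map, Polynomial.coeff_zero_eq_eval_zero, heq, eval_multiset_prod,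
      Multiset.map_map]
    simp
  have h1 : ‖algebraMap ℚ ℂ (f.coeff 0)‖ = β ^ e := by
    rw [h0, ← hcard, ← normHom_apply, map_multiset_prod (normHom (α := ℂ)), Multiset.map_map]
    have : Multiset.map (⇑normHom ∘ fun a => -a) R = Multiset.replicate (Multiset.card R) β := by
      rw [← Multiset.card_map (⇑normHom ∘ fun a => -a) R]
      apply Multiset.eq_replicate_of_mem
      intro x hx
      obtain ⟨z, hz, rfl⟩ := Multiset.mem_map.mp hx
      simp [habs z hz]
    rw [this, Multiset.prod_replicate]
  have hβe : ((|f.coeff 0| : ℚ) : ℝ) = β ^ e := by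
    have h2' : ‖algebraMap ℚ ℂ (f.coeff 0)‖ = |((f.coeff 0 : ℚ) : ℝ)| := by
      have : (algebraMap ℚ ℂ (f.coeff 0)) = (((f.coeff 0 : ℚ) : ℝ) : ℂ) := by
        push_cast; simp
      rw [this, Complex.norm_real, Real.norm_eq_abs]
    push_cast
    rw [← h2']
    exact h1
  set r := |f.coeff 0| with hr
  have hgmon : (X ^ e - C r).Monic := monic_X_pow_sub_C r (by omega)
  have hdvd2 : f ∣ X ^ e - C r := by
    apply minpoly.dvd ℚ β
    rw [map_sub, map_pow, aeval_X, aeval_C]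
    have : (algebraMap ℚ ℝ) r = ((r : ℚ) : ℝ) := by norm_cast
    rw [this, hβe, sub_self]
  have hfeq : f = X ^ e - C r := by
    apply eq_of_monic_of_associated hmon hgmon
    apply associated_of_dvd_of_natDegree_le hdvd2 hgmon.ne_zero
    rw [natDegree_X_pow_sub_C]
  have h5 : f.nextCoeff = f.coeff (e - 1) := nextCoeff_of_natDegree_pos (by omega)
  rw [h5, hfeq, coeff_sub, coeff_X_pow, coeff_C, if_neg (by omega : ¬ (e - 1 = e)),
    if_neg (by omega : ¬ (e - 1 = 0)), sub_zero]

set_option synthInstance.maxHeartbeats 1000000 in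
set_option maxHeartbeats 2000000 in
/-- The trace (over `ℚ`) of an irrational positive element of a real number field whose
`d`-th power is rational, vanishes. -/
private lemma aux_trace_zero (K : IntermediateField ℚ ℝ) [FiniteDimensional ℚ K]
    (x : K) (hx : 0 < (x : ℝ)) {d : ℕ} (hd : 0 < d) {c : ℚ} (hc : (x : ℝ) ^ d = (c : ℝ))
    (hirr : ∀ q : ℚ, (q : ℝ) ≠ (x : ℝ)) : Algebra.trace ℚ K x = 0 := by
  have hint : IsIntegral ℚ x := IsIntegral.of_finite ℚ x
  have hmp : minpoly ℚ ((x : ℝ)) = minpoly ℚ x := by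
    have h := minpoly.algebraMap_eq (A := ℚ) (B := K) (algebraMap K ℝ).injective x
    simpa using h
  have h2 : 2 ≤ (minpoly ℚ x).natDegree := by
    rw [minpoly.two_le_natDegree_iff hint]
    rintro ⟨q, hq⟩
    exact hirr q (by rw [← hq]; rfl)
  have hnext : (minpoly ℚ x).nextCoeff = 0 := by
    have h := aux_nextCoeff_zero hx hd hc (by rw [hmp]; exact h2)
    rwa [hmp] at h
  haveI : FiniteDimensional (↥ℚ⟮x⟯) (↥K) := FiniteDimensional.right ℚ (↥ℚ⟮x⟯) (↥K)
  have key : Algebra.trace ℚ (↥ℚ⟮x⟯) (IntermediateField.AdjoinSimple.gen ℚ x) = 0 := by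
    have hgen : (IntermediateField.adjoin.powerBasis hint).gen
        = IntermediateField.AdjoinSimple.gen ℚ x := rfl
    rw [← hgen]
    refine (PowerBasis.trace_gen_eq_nextCoeff_minpoly _).trans ?_
    rw [hgen, neg_eq_zero]
    have hm : (minpoly ℚ (IntermediateField.AdjoinSimple.gen ℚ x)).nextCoeff = 0 := by
      erw [IntermediateField.minpoly_gen, hnext]
    exact hm
  have hxF : x = algebraMap (↥ℚ⟮x⟯) (↥K) (IntermediateField.AdjoinSimple.gen ℚ x) := by
    rw [IntermediateField.AdjoinSimple.algebraMap_gen]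
  have h6 := Algebra.trace_algebraMap (R := ↥ℚ⟮x⟯) (S := ↥K)
    (IntermediateField.AdjoinSimple.gen ℚ x)
  rw [← hxF] at h6
  rw [← Algebra.trace_trace (S := ↥ℚ⟮x⟯) x, h6, map_nsmul, key, smul_zero]

/-- No rational has `d`-th power equal to `∏ pₖ^{lₖ}` when some `0 < lₖ < d`. -/
private lemma aux_irrational {n d : ℕ} (hd : 0 < d) (p : Fin n → ℕ) (hp : ∀ k, (p k).Prime)
    (hinj : Function.Injective p) (l : Fin n → ℕ) (hld : ∀ k, l k < d) {k₀ : Fin n}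
    (hk : l k₀ ≠ 0) (q : ℚ) (hq : (q : ℝ) ^ d = ((∏ k, p k ^ l k : ℕ) : ℝ)) : False := by
  set N : ℕ := ∏ k, p k ^ l k with hN
  have hq' : q ^ d = (N : ℚ) := by exact_mod_cast hq
  have hden : q.den = 1 := by
    have h1 : (q ^ d).den = 1 := by rw [hq']; exact Rat.den_natCast N
    rw [Rat.den_pow] at h1
    exact (pow_eq_one_iff_left hd.ne').mp h1

  have hz : (q.num.natAbs) ^ d = N := by
    have h2 : (q.num : ℚ) = q := Rat.num_div_den q ▸ by rw [hden]; simp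
    have h3 : (q.num) ^ d = (N : ℤ) := by exact_mod_cast (h2 ▸ hq' : (q.num : ℚ) ^ d = N)
    have := congrArg Int.natAbs h3
    simpa [Int.natAbs_pow] using this
  have hN0 : N ≠ 0 := by
    rw [hN]
    exact Finset.prod_ne_zero_iff.mpr fun k _ => pow_ne_zero _ (hp k).pos.ne'
  have ha0 : q.num.natAbs ≠ 0 := by
    intro h; rw [h] at hz; simp [zero_pow hd.ne'] at hz; exact hN0 hz.symm
  -- compare factorizations at the prime `p k₀`
  have hfac : N.factorization (p k₀) = l k₀ := by
    rw [hN, Nat.factorization_prod fun k _ => pow_ne_zero _ (hp k).pos.ne']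
    rw [Finset.sum_apply']
    rw [Finset.sum_eq_single k₀]
    · rw [(hp k₀).factorization_pow, Finsupp.single_eq_same]
    · intro k _ hkne
      rw [(hp k).factorization_pow, Finsupp.single_eq_of_ne' (fun h => hkne (hinj h))]
    · intro h; exact absurd (Finset.mem_univ k₀) h
  have hfac2 : (q.num.natAbs ^ d).factorization (p k₀) = d * (q.num.natAbs).factorization (p k₀) := by
    rw [Nat.factorization_pow]; simp
  rw [hz, hfac] at hfac2
  rcases Nat.eq_zero_or_pos ((q.num.natAbs).factorization (p k₀)) with h | h
  · rw [h, Nat.mul_zero] at hfac2; exact hk hfac2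
  · have : d ≤ l k₀ := hfac2 ▸ Nat.le_mul_of_pos_right d h
    exact absurd (hld k₀) (not_lt.mpr this)

open scoped BigOperators

set_option maxHeartbeats 1000000 in
/-- For distinct primes `p₁, …, pₙ` and `d ≥ 2`, the `dⁿ` real numbers
`φ(j) = (∏ₖ pₖ^{jₖ})^{1/d}`, `j ∈ {0,…,d-1}ⁿ`, are linearly independent over `ℚ`. -/
theorem linearIndependent_prime_roots {n d : ℕ} (hd : 2 ≤ d) (p : Fin n → ℕ)
    (hp : ∀ k, (p k).Prime) (hinj : Function.Injective p) :
    LinearIndependent ℚ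
      (fun j : Fin n → Fin d => ((∏ k, (p k : ℝ) ^ (j k : ℕ)) ^ ((d : ℝ)⁻¹) : ℝ)) := by
  have hd0 : 0 < d := by omega
  set θ : Fin n → ℝ := fun k => (p k : ℝ) ^ ((d : ℝ)⁻¹) with hθdef
  have hppos : ∀ k, (0:ℝ) < (p k : ℝ) := fun k => by exact_mod_cast (hp k).pos
  have hθpos : ∀ k, 0 < θ k := fun k => Real.rpow_pos_of_pos (hppos k) _
  have hθd : ∀ k, θ k ^ d = (p k : ℝ) := fun k =>
    Real.rpow_inv_natCast_pow (hppos k).le hd0.ne'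
  set Θ : (Fin n → ℕ) → ℝ := fun l => ∏ k, θ k ^ l k with hΘdef
  have hΘpos : ∀ l, 0 < Θ l := fun l => Finset.prod_pos fun k _ => pow_pos (hθpos k) _
  have hrepr : ∀ j : Fin n → Fin d,
      ((∏ k, (p k : ℝ) ^ (j k : ℕ)) ^ ((d : ℝ)⁻¹)) = Θ (fun k => (j k : ℕ)) := by
    intro j
    rw [hΘdef, ← Real.finset_prod_rpow _ _ (fun k _ => pow_nonneg (hppos k).le _)]
    refine Finset.prod_congr rfl fun k _ => ?_
    rw [← Real.rpow_natCast (p k : ℝ) (j k : ℕ), ← Real.rpow_mul (hppos k).le,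
      mul_comm, Real.rpow_mul (hppos k).le, Real.rpow_natCast]
  have hΘval : ∀ l : Fin n → ℕ, Θ l ^ d = ((∏ k, p k ^ l k : ℕ) : ℝ) := by
    intro l
    rw [hΘdef]; push_cast
    rw [← Finset.prod_pow]
    refine Finset.prod_congr rfl fun k _ => ?_
    rw [← pow_mul, mul_comm, pow_mul, hθd]
  have hΘint : ∀ l : Fin n → ℕ, IsIntegral ℚ (Θ l) := by
    intro l
    refine ⟨Polynomial.X ^ d - Polynomial.C ((∏ k, p k ^ l k : ℕ) : ℚ),
      Polynomial.monic_X_pow_sub_C _ hd0.ne', ?_⟩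
    simp only [Polynomial.eval₂_sub, Polynomial.eval₂_pow, Polynomial.eval₂_X,
      Polynomial.eval₂_C, hΘval l]
    simp
  set S : Set ℝ := Set.range (fun j : Fin n → Fin d => Θ (fun k => (j k : ℕ))) with hSdef
  haveI : Finite S := (Set.finite_range _).to_subtype
  set K : IntermediateField ℚ ℝ := IntermediateField.adjoin ℚ S with hKdef
  haveI hfin : FiniteDimensional ℚ K := by
    apply IntermediateField.finiteDimensional_adjoin
    rintro x ⟨j, rfl⟩
    exact hΘint _
  set Φ : (Fin n → Fin d) → K := fun j =>
    ⟨Θ (fun k => (j k : ℕ)), IntermediateField.subset_adjoin ℚ S ⟨j, rfl⟩⟩ with hΦdef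
  rw [Fintype.linearIndependent_iff]
  intro g hg j₀
  simp only [hrepr] at hg
  -- the shifted index and the integer multiplier
  set l₀ : Fin n → ℕ := fun k => d - (j₀ k : ℕ) with hl₀def
  set r : (Fin n → Fin d) → (Fin n → Fin d) :=
    fun j k => ⟨((j k : ℕ) + l₀ k) % d, Nat.mod_lt _ hd0⟩ with hrdef
  set m : (Fin n → Fin d) → ℕ := fun j => ∏ k, p k ^ (((j k : ℕ) + l₀ k) / d) with hmdef
  have hmul : ∀ j : Fin n → Fin d,
      Θ (fun k => (j k : ℕ)) * Θ l₀ = (m j : ℝ) * Θ (fun k => ((r j) k : ℕ)) := by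
    intro j
    rw [hΘdef, hmdef]; push_cast
    rw [← Finset.prod_mul_distrib, ← Finset.prod_mul_distrib]
    refine Finset.prod_congr rfl fun k _ => ?_
    have hsplit : (j k : ℕ) + l₀ k
        = d * (((j k : ℕ) + l₀ k) / d) + ((j k : ℕ) + l₀ k) % d := (Nat.div_add_mod _ d).symm
    calc θ k ^ (j k : ℕ) * θ k ^ (l₀ k) = θ k ^ ((j k : ℕ) + l₀ k) := (pow_add _ _ _).symm
      _ = θ k ^ (d * (((j k : ℕ) + l₀ k) / d)) * θ k ^ (((j k : ℕ) + l₀ k) % d) := by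
          rw [← pow_add, ← hsplit]
      _ = (p k : ℝ) ^ (((j k : ℕ) + l₀ k) / d) * θ k ^ (((j k : ℕ) + l₀ k) % d) := by
          rw [pow_mul, hθd]
  -- new relation in ℝ
  have hrel : ∑ j : Fin n → Fin d, ((g j * (m j : ℚ)) : ℚ) • Θ (fun k => ((r j) k : ℕ)) = 0 := by
    have step : ∑ j : Fin n → Fin d, ((g j * (m j : ℚ)) : ℚ) • Θ (fun k => ((r j) k : ℕ))
        = (∑ j : Fin n → Fin d, g j • Θ (fun k => (j k : ℕ))) * Θ l₀ := by
      rw [Finset.sum_mul]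
      refine Finset.sum_congr rfl fun j _ => ?_
      rw [Rat.smul_def, Rat.smul_def, mul_assoc, hmul j]
      push_cast
      ring
    rw [step, hg, zero_mul]
  -- lift the relation to `K`
  have hrelK : ∑ j : Fin n → Fin d, ((g j * (m j : ℚ)) : ℚ) • Φ (r j) = 0 := by
    apply Subtype.coe_injective
    push_cast
    simpa [hrdef] using hrel
  -- apply the trace
  have htr := congrArg (Algebra.trace ℚ K) hrelK
  rw [map_sum, map_zero] at htr
  have hterm0 : ∀ j, j ≠ j₀ → Algebra.trace ℚ K (Φ (r j)) = 0 := by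
    intro j hj
    obtain ⟨k, hk⟩ : ∃ k, j k ≠ j₀ k := by
      by_contra h; push_neg at h; exact hj (funext h)
    have hrk : ((r j) k : ℕ) ≠ 0 := by
      have h1 : (j₀ k : ℕ) < d := (j₀ k).isLt
      have h2 : (j k : ℕ) < d := (j k).isLt
      have hne : (j k : ℕ) ≠ (j₀ k : ℕ) := fun h => hk (Fin.ext h)
      show ((j k : ℕ) + l₀ k) % d ≠ 0
      intro h0
      obtain ⟨t, ht⟩ := Nat.dvd_of_mod_eq_zero h0
      have hpos : 0 < (j k : ℕ) + l₀ k := by simp only [hl₀def]; omega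
      have hlt : (j k : ℕ) + l₀ k < 2 * d := by simp only [hl₀def]; omega
      have ht1 : 0 < t := by
        rcases Nat.eq_zero_or_pos t with h | h
        · rw [h, Nat.mul_zero] at ht; omega
        · exact h
      have ht2 : t < 2 := by
        by_contra h'
        push_neg at h'
        have : 2 * d ≤ d * t := by calc 2 * d = d * 2 := by ring
                                      _ ≤ d * t := Nat.mul_le_mul_left d h'
        omega
      have : t = 1 := by omega
      rw [this, Nat.mul_one] at ht
      simp only [hl₀def] at ht
      omega
    apply aux_trace_zero K (Φ (r j)) (hΘpos _) hd0
      (c := ((∏ k', p k' ^ (((r j) k' : ℕ)) : ℕ) : ℚ))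
    · show Θ (fun k' => ((r j) k' : ℕ)) ^ d = _
      rw [hΘval]; norm_cast
    · intro q hq
      refine aux_irrational hd0 p hp hinj (fun k' => ((r j) k' : ℕ))
        (fun k' => ((r j) k').isLt) hrk q ?_
      rw [hq]
      show Θ (fun k' => ((r j) k' : ℕ)) ^ d = _
      rw [hΘval]
  have htermj₀ : Algebra.trace ℚ K (Φ (r j₀)) = (Module.finrank ℚ K : ℚ) := by
    have hone : Φ (r j₀) = 1 := by
      apply Subtype.coe_injective
      show Θ (fun k => ((r j₀) k : ℕ)) = 1
      have hz : ∀ k, ((j₀ k : ℕ) + l₀ k) % d = 0 := by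
        intro k
        have : (j₀ k : ℕ) + l₀ k = d := by simp only [hl₀def]; omega
        rw [this, Nat.mod_self]
      rw [hΘdef]
      refine Finset.prod_eq_one fun k _ => ?_
      show θ k ^ (((j₀ k : ℕ) + l₀ k) % d) = 1
      simp [hz k]
    rw [hone]
    have h1 := Algebra.trace_algebraMap (R := ℚ) (S := K) (1 : ℚ)
    simpa using h1
  rw [Finset.sum_eq_single j₀ (fun j _ hj => by rw [map_smul, hterm0 j hj, smul_zero])
    (fun h => absurd (Finset.mem_univ j₀) h)] at htr
  rw [map_smul, htermj₀, smul_eq_mul] at htr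
  have hm0 : (m j₀ : ℚ) ≠ 0 := by
    have : m j₀ ≠ 0 := Finset.prod_ne_zero_iff.mpr fun k _ => pow_ne_zero _ (hp k).pos.ne'
    exact_mod_cast this
  have hfr : (Module.finrank ℚ K : ℚ) ≠ 0 := by
    have := Module.finrank_pos (R := ℚ) (M := K)
    positivity
  rcases mul_eq_zero.mp htr with h | h
  · rcases mul_eq_zero.mp h with h' | h'
    · exact h'
    · exact absurd h' hm0
  · exact absurd h hfr
end

section
/- If m > 1 is a square-free integer and d ≥ 2, then m^{1/d} (the positive real d-th root) is an algebraic number of degree exactly d over Q. -/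
open Polynomial

/-- If `m > 1` is a square-free integer and `d ≥ 2`, then the positive real `d`-th root
`m^{1/d}` is an algebraic number of degree exactly `d` over `ℚ`. -/
theorem degree_of_root_of_squarefree {m d : ℕ} (hm : Squarefree m) (h1 : 1 < m)
    (hd : 2 ≤ d) :
    IsAlgebraic ℚ ((m : ℝ) ^ ((d : ℝ)⁻¹)) ∧
      (minpoly ℚ ((m : ℝ) ^ ((d : ℝ)⁻¹))).natDegree = d := by
  have hd0 : d ≠ 0 := by omega
  set α : ℝ := (m : ℝ) ^ ((d : ℝ)⁻¹) with hα_def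
  have hα_pow : α ^ d = (m : ℝ) :=
    Real.rpow_inv_natCast_pow (Nat.cast_nonneg m) hd0
  -- α is a root of X^d - m
  set p : ℚ[X] := X ^ d - C (m : ℚ) with hp_def
  have hp_monic : p.Monic := monic_X_pow_sub_C _ hd0
  have hp_ne : p ≠ 0 := hp_monic.ne_zero
  have hp_deg : p.natDegree = d := natDegree_X_pow_sub_C
  have hroot : Polynomial.aeval α p = 0 := by
    simp [hp_def, hα_pow]
  have hint : IsIntegral ℚ α := ⟨p, hp_monic, by simpa [Polynomial.aeval_def] using hroot⟩
  have halg : IsAlgebraic ℚ α := hint.isAlgebraic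
  refine ⟨halg, ?_⟩
  set P : ℚ[X] := minpoly ℚ α with hP_def
  have hP_monic : P.Monic := minpoly.monic hint
  set k : ℕ := P.natDegree with hk_def
  have hPdvd : P ∣ p := minpoly.dvd ℚ α hroot
  have hk_le : k ≤ d := hp_deg ▸ natDegree_le_of_dvd hPdvd hp_ne
  have hk_pos : 0 < k := minpoly.natDegree_pos hint
  -- work over ℂ
  set Q : ℂ[X] := P.map (algebraMap ℚ ℂ) with hQ_def
  have hQ_monic : Q.Monic := hP_monic.map _
  have hQ_splits : Q.Splits :=
    IsAlgClosed.splits Q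
  have hQ_deg : Q.natDegree = k := natDegree_map _
  have hcard : Multiset.card Q.roots = k := by
    rw [← hQ_deg]; exact (splits_iff_card_roots.1 hQ_splits)
  -- every root of Q has absolute value α
  have habs : ∀ β ∈ Q.roots, ‖β‖ = α := by
    intro β hβ
    have hβroot : Q.IsRoot β := isRoot_of_mem_roots hβ
    have hdvd' : Q ∣ p.map (algebraMap ℚ ℂ) := Polynomial.map_dvd _ hPdvd
    have hβp : (p.map (algebraMap ℚ ℂ)).IsRoot β := hβroot.dvd hdvd'
    have hβd : β ^ d = (m : ℂ) := by
      have := hβp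
      simp only [hp_def, Polynomial.IsRoot, eval_map, eval₂_sub, eval₂_X_pow, eval₂_C,
        sub_eq_zero] at this
      simp only [map_natCast] at this
      exact this
    have h1' : ‖β‖ ^ d = (m : ℝ) := by
      rw [← norm_pow, hβd, Complex.norm_natCast]
    have h2' : ‖β‖ ^ d = α ^ d := by rw [h1', hα_pow]
    exact (pow_left_strictMonoOn₀ hd0).injOn
      (Set.mem_setOf.2 (norm_nonneg _))
      (Set.mem_setOf.2 (Real.rpow_nonneg (Nat.cast_nonneg m) _)) h2'
  -- |constant coefficient| = α ^ k
  have hprod : Q.coeff 0 = (-1) ^ k * Q.roots.prod := by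
    rw [← hQ_deg]; exact hQ_splits.coeff_zero_eq_prod_roots_of_monic hQ_monic
  have habs_coeff : ‖Q.coeff 0‖ = α ^ k := by
    rw [hprod, norm_mul, norm_pow, norm_neg, norm_one, one_pow, one_mul]
    have : ‖Q.roots.prod‖ = (Q.roots.map (‖·‖)).prod := by
      simpa using (Multiset.prod_hom Q.roots (normHom : ℂ →*₀ ℝ).toMonoidHom).symm
    rw [this]
    have : Q.roots.map (‖·‖) = Multiset.replicate k α := by
      rw [Multiset.eq_replicate]
      constructor
      · simp [hcard]
      · intro b hb
        obtain ⟨β, hβ, rfl⟩ := Multiset.mem_map.1 hb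
        exact habs β hβ
    rw [this, Multiset.prod_replicate]
  -- the constant coefficient is rational
  set q : ℚ := P.coeff 0 with hq_def
  have hQcoeff : Q.coeff 0 = (q : ℂ) := by
    simp [hQ_def, coeff_map, hq_def]
  have hαk : |(q : ℝ)| = α ^ k := by
    rw [← habs_coeff, hQcoeff]
    rw [show ((q : ℂ)) = (((q : ℝ) : ℂ)) by push_cast; ring, Complex.norm_real, Real.norm_eq_abs]
  -- raise to the d-th power : |q|^d = m^k in ℚ
  have hkey : (|q|) ^ d = (m : ℚ) ^ k := by
    have : (((|q|) ^ d : ℚ) : ℝ) = (((m : ℚ) ^ k : ℚ) : ℝ) := by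
      push_cast
      rw [hαk, ← pow_mul, mul_comm k d, pow_mul, hα_pow]
    exact_mod_cast this
  -- |q| is a nonnegative integer
  set r : ℚ := |q| with hr_def
  have hr_den : r.den = 1 := by
    have h1' : (r ^ d).den = r.den ^ d := Rat.den_pow r d
    have h2' : (r ^ d).den = 1 := by
      rw [hkey]
      rw [show ((m : ℚ) ^ k) = ((m ^ k : ℕ) : ℚ) by push_cast; ring]
      exact Rat.den_natCast _
    have h3 : r.den ^ d = 1 := h1'.symm.trans h2'
    by_contra hne
    have h4 : 2 ≤ r.den := by have := r.pos; omega
    have : 2 ^ d ≤ r.den ^ d := Nat.pow_le_pow_left h4 d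
    have : 1 < 2 ^ d := Nat.one_lt_two_pow hd0
    omega
  have hr_nonneg : 0 ≤ r := abs_nonneg q
  obtain ⟨N, hN⟩ : ∃ N : ℕ, r = (N : ℚ) := by
    have hnum : ((r.num : ℚ)) = r := (Rat.den_eq_one_iff r).1 hr_den
    have hnn : 0 ≤ r.num := Rat.num_nonneg.2 hr_nonneg
    refine ⟨r.num.toNat, ?_⟩
    rw [← hnum]
    norm_cast
    exact (Int.toNat_of_nonneg hnn).symm
  have hNd : (N : ℚ) ^ d = (m : ℚ) ^ k := by rw [← hN]; exact hkey
  have hNd' : N ^ d = m ^ k := by exact_mod_cast hNd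
  -- use squarefreeness : d ∣ k
  obtain ⟨pp, hpp, hppdvd⟩ := Nat.exists_prime_and_dvd (show m ≠ 1 by omega)
  have hm0 : m ≠ 0 := by omega
  have hfac1 : m.factorization pp = 1 := by
    have hle : m.factorization pp ≤ 1 := (Nat.squarefree_iff_factorization_le_one hm0).1 hm pp
    have hge : 1 ≤ m.factorization pp :=
      (Nat.Prime.factorization_pos_of_dvd hpp hm0 hppdvd)
    omega
  have hN0 : N ≠ 0 := by
    intro h
    rw [h] at hNd'
    simp [hd0] at hNd'
    exact absurd hNd'.symm (pow_ne_zero k hm0)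
  have hfack : (m ^ k).factorization pp = k := by
    rw [Nat.factorization_pow, Finsupp.smul_apply, hfac1]; simp
  have hfacN : (N ^ d).factorization pp = d * N.factorization pp := by
    rw [Nat.factorization_pow, Finsupp.smul_apply]; simp [mul_comm]
  have hdk : d ∣ k := by
    refine ⟨N.factorization pp, ?_⟩
    rw [← hfack, ← hNd', hfacN]
  exact le_antisymm hk_le (Nat.le_of_dvd hk_pos hdk)
end

section
/- Let D be an integer ≥ 4 and ε ∈ [0,1]. Let ψ ∈ ℂ^D be a random vector whose components are i.i.d. uniform on the circle of radius D^{-1/2} (so ||ψ|| = 1), and let φ ∈ ℂ^D be any fixed unit vector. Then P[ ||φ - ψ|| ≤ ε ] ≤ 4·exp(1 - 3D/16). -/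
open MeasureTheory


section SteinhausAux
open Real intervalIntegral Nat ENNReal


lemma cos_odd_moment (k : ℕ) : ∫ x in (0:ℝ)..(2*π), Real.cos x ^ (2*k+1) = 0 := by
  induction k with
  | zero => simpa using integral_cos (a := 0) (b := 2*π)
  | succ n ih =>
    have h := integral_cos_pow (a := 0) (b := 2*π) (2*n+1)
    have e : 2*(n+1)+1 = (2*n+1)+2 := by ring
    rw [e, h]
    simp [Real.sin_two_pi, ih]

lemma cos_even_moment (k : ℕ) :
    (∫ x in (0:ℝ)..(2*π), Real.cos x ^ (2*k)) * (4^k * (k ! : ℝ)) ≤ 2*π*((2*k)! : ℝ) := by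
  induction k with
  | zero =>
    simp only [Nat.mul_zero, pow_zero, Nat.factorial_zero, Nat.cast_one, mul_one, one_mul]
    rw [intervalIntegral.integral_const]
    simp
  | succ n ih =>
    have h := integral_cos_pow (a := 0) (b := 2*π) (2*n)
    push_cast at h
    have e : 2*(n+1) = (2*n)+2 := by ring
    have hnn : 0 ≤ ∫ x in (0:ℝ)..(2*π), Real.cos x ^ (2*n) := by
      apply intervalIntegral.integral_nonneg Real.two_pi_pos.le
      intro x _; exact (even_two_mul n).pow_nonneg _
    rw [e, h]
    simp only [Real.sin_two_pi, Real.sin_zero, mul_zero, zero_mul, sub_zero, zero_div, zero_add]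
    have hfac : ((2*(n+1))! : ℝ) = (2*n+2)*(2*n+1)*((2*n)! : ℝ) := by
      have e2 : 2*(n+1) = (2*n)+2 := by ring
      rw [e2]
      push_cast [Nat.factorial_succ]
      ring
    have hfac2 : ((n+1)! : ℝ) = (n+1)*(n ! : ℝ) := by push_cast [Nat.factorial_succ]; ring
    calc ((2*(n:ℝ)+1)/(2*n+2) * ∫ x in (0:ℝ)..(2*π), Real.cos x ^ (2*n)) * (4^(n+1) * ((n+1)! : ℝ))
        = ((∫ x in (0:ℝ)..(2*π), Real.cos x ^ (2*n)) * (4^n * (n ! : ℝ))) * ((2*n+1)/(2*n+2) * (4*(n+1))) := by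
          rw [pow_succ, hfac2]; ring
      _ ≤ (2*π*((2*n)! : ℝ)) * ((2*n+1)/(2*n+2) * (4*(n+1))) := by
          apply mul_le_mul_of_nonneg_right ih
          positivity
      _ = (2*π*((2*n)! : ℝ)) * (2*(2*n+1)) := by
          have h2 : (2*(n:ℝ)+2) ≠ 0 := by positivity
          field_simp
          ring
      _ ≤ (2*π*((2*n)! : ℝ)) * ((2*n+2)*(2*n+1)) := by
          have hp : (0:ℝ) ≤ 2*π*((2*n)! : ℝ) := by positivity
          have key : (2:ℝ)*(2*n+1) ≤ (2*n+2)*(2*n+1) := by nlinarith [Nat.cast_nonneg (α := ℝ) n]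
          exact mul_le_mul_of_nonneg_left key hp
      _ = 2*π*((2*(n+1))! : ℝ) := by rw [hfac]; ring

lemma exp_eq_tsum_pow_div (y : ℝ) : Real.exp y = ∑' n : ℕ, y ^ n / n ! := by
  rw [Real.exp_eq_exp_ℝ, NormedSpace.exp_eq_tsum_div]

lemma mgf_cos (c : ℝ) (hc : 0 ≤ c) :
    ∫ x in (0:ℝ)..(2*π), Real.exp (c * Real.cos x) ≤ 2*π*Real.exp (c^2/4) := by
  set f : ℕ → C(ℝ, ℝ) := fun n => ⟨fun x => (c * Real.cos x) ^ n / n !, by fun_prop⟩ with hf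
  have hbd : ∀ n : ℕ, ∀ x : ℝ, ‖(c * Real.cos x) ^ n / (n ! : ℝ)‖ ≤ c ^ n / (n ! : ℝ) := by
    intro n x
    rw [norm_div, norm_pow, Real.norm_natCast]
    apply div_le_div_of_nonneg_right ?_ ?_ |>.trans_eq rfl
    · apply pow_le_pow_left₀ (norm_nonneg _)
      rw [Real.norm_eq_abs, abs_mul, abs_of_nonneg hc]
      calc c * |Real.cos x| ≤ c * 1 := by
            exact mul_le_mul_of_nonneg_left (abs_cos_le_one x) hc
        _ = c := mul_one c
    · positivity
  have hf_sum : Summable fun n : ℕ =>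
      ‖(f n).restrict (⟨Set.uIcc (0:ℝ) (2*π), isCompact_uIcc⟩ : TopologicalSpace.Compacts ℝ)‖ := by
    apply Summable.of_nonneg_of_le (fun n => norm_nonneg _)
      (fun n => ?_) (Real.summable_pow_div_factorial c)
    apply ContinuousMap.norm_le _ (by positivity) |>.mpr
    intro x
    exact hbd n x
  have hswap := tsum_intervalIntegral_eq_of_summable_norm (a := 0) (b := 2*π) hf_sum
  set t : ℕ → ℝ := fun n => ∫ x in (0:ℝ)..(2*π), (c * Real.cos x) ^ n / n ! with htdef
  have ht : ∀ n, t n = (c ^ n / (n ! : ℝ)) * ∫ x in (0:ℝ)..(2*π), Real.cos x ^ n := by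
    intro n
    rw [htdef, ← intervalIntegral.integral_const_mul]
    apply intervalIntegral.integral_congr
    intro x _
    ring
  have ht_summ : Summable t := by
    apply Summable.of_norm_bounded (g := fun n => (c ^ n / (n ! : ℝ)) * (2*π))
      (((Real.summable_pow_div_factorial c).mul_right (2*π)))
    intro n
    have := intervalIntegral.norm_integral_le_of_norm_le_const (a := (0:ℝ)) (b := 2*π)
      (C := c ^ n / (n ! : ℝ)) (f := fun x => (c * Real.cos x) ^ n / n !)
      (fun x _ => hbd n x)
    rw [sub_zero, abs_of_nonneg Real.two_pi_pos.le] at this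
    exact this
  have he : Summable fun k => t (2*k) :=
    ht_summ.comp_injective fun a b h => by omega
  have ho : Summable fun k => t (2*k+1) :=
    ht_summ.comp_injective fun a b h => by omega
  have hsplit := tsum_even_add_odd he ho
  have hodd : ∀ k, t (2*k+1) = 0 := by
    intro k
    rw [ht, cos_odd_moment, mul_zero]
  have hrhs_summ : Summable fun k : ℕ => 2*π*((c^2/4) ^ k / k !) :=
    (Real.summable_pow_div_factorial (c^2/4)).mul_left (2*π)
  have heven : ∀ k, t (2*k) ≤ 2*π*((c^2/4) ^ k / k !) := by
    intro k
    rw [ht]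
    have hm := cos_even_moment k
    have h4 : (0:ℝ) < 4 ^ k * (k ! : ℝ) := by positivity
    have hI : (∫ x in (0:ℝ)..(2*π), Real.cos x ^ (2*k)) ≤ 2*π*((2*k)! : ℝ) / (4 ^ k * (k ! : ℝ)) :=
      (le_div_iff₀ h4).mpr hm
    have hcpow : (0:ℝ) ≤ c ^ (2*k) / ((2*k)! : ℝ) := by positivity
    calc c ^ (2*k) / ((2*k)! : ℝ) * ∫ x in (0:ℝ)..(2*π), Real.cos x ^ (2*k)
        ≤ c ^ (2*k) / ((2*k)! : ℝ) * (2*π*((2*k)! : ℝ) / (4 ^ k * (k ! : ℝ))) :=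
          mul_le_mul_of_nonneg_left hI hcpow
      _ = 2*π*((c^2/4) ^ k / k !) := by
          have h1 : ((2*k)! : ℝ) ≠ 0 := by positivity
          have h2 : (k ! : ℝ) ≠ 0 := by positivity
          have h3 : (c^2/4 : ℝ)^k = c^(2*k)/4^k := by rw [div_pow, pow_mul]
          rw [h3]
          field_simp
  calc ∫ x in (0:ℝ)..(2*π), Real.exp (c * Real.cos x)
      = ∫ x in (0:ℝ)..(2*π), ∑' n : ℕ, (c * Real.cos x) ^ n / n ! := by
        apply intervalIntegral.integral_congr
        intro x _
        exact exp_eq_tsum_pow_div (c * Real.cos x)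
    _ = ∑' n, t n := hswap.symm
    _ = (∑' k, t (2*k)) + ∑' k, t (2*k+1) := hsplit.symm
    _ = ∑' k, t (2*k) := by simp [hodd]
    _ ≤ ∑' k : ℕ, 2*π*((c^2/4) ^ k / k !) := Summable.tsum_le_tsum heven he hrhs_summ
    _ = 2*π*Real.exp (c^2/4) := by
        rw [tsum_mul_left, exp_eq_tsum_pow_div]

end SteinhausAux
section SteinhausAux2
open Real intervalIntegral ENNReal

lemma mgf_phase (a b : ℝ) :
    ∫ x in (0:ℝ)..(2*π), Real.exp (a * Real.cos x + b * Real.sin x)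
      ≤ 2*π*Real.exp ((a^2+b^2)/4) := by
  set z : ℂ := Complex.mk a b with hz
  have hre : z.re = a := rfl
  have him : z.im = b := rfl
  by_cases h0 : z = 0
  · have ha : a = 0 := by rw [← hre, h0]; rfl
    have hb : b = 0 := by rw [← him, h0]; rfl
    subst ha; subst hb
    simp only [zero_mul, add_zero, Real.exp_zero, zero_pow, zero_add]
    rw [intervalIntegral.integral_const]
    have : (1:ℝ) ≤ Real.exp ((0^2+0^2)/4) := by
      rw [show ((0:ℝ)^2+0^2)/4 = 0 by norm_num, Real.exp_zero]
    simp only [smul_eq_mul, sub_zero]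
    nlinarith [Real.pi_pos]
  · set c : ℝ := ‖z‖ with hc
    have hcpos : 0 < c := by rw [hc]; exact norm_pos_iff.mpr h0
    set θ : ℝ := Complex.arg z with hθ
    have hca : c * Real.cos θ = a := by
      rw [hθ, Complex.cos_arg h0, hre, ← hc]; field_simp
    have hcb : c * Real.sin θ = b := by
      rw [hθ, Complex.sin_arg, him, ← hc]; field_simp
    have hpt : ∀ x : ℝ, a * Real.cos x + b * Real.sin x = c * Real.cos (x - θ) := by
      intro x
      rw [Real.cos_sub, ← hca, ← hcb]
      ring
    have hsq : c^2 = a^2 + b^2 := by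
      rw [hc, Complex.sq_norm, Complex.normSq_apply, hre, him]; ring
    have hper : Function.Periodic (fun x => Real.exp (c * Real.cos x)) (2*π) := by
      intro x; simp [Real.cos_add_two_pi]
    calc ∫ x in (0:ℝ)..(2*π), Real.exp (a * Real.cos x + b * Real.sin x)
        = ∫ x in (0:ℝ)..(2*π), Real.exp (c * Real.cos (x - θ)) := by
          apply intervalIntegral.integral_congr; intro x _
          show Real.exp (a * Real.cos x + b * Real.sin x) = Real.exp (c * Real.cos (x - θ))
          rw [hpt]
      _ = ∫ x in (0-θ)..(2*π-θ), Real.exp (c * Real.cos x) := by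
          exact intervalIntegral.integral_comp_sub_right (fun y => Real.exp (c * Real.cos y)) θ
      _ = ∫ x in (0:ℝ)..(2*π), Real.exp (c * Real.cos x) := by
          have := hper.intervalIntegral_add_eq (-θ) 0
          simpa [sub_eq_neg_add, add_comm] using this
      _ ≤ 2*π*Real.exp (c^2/4) := mgf_cos c hcpos.le
      _ = 2*π*Real.exp ((a^2+b^2)/4) := by rw [hsq]

lemma lintegral_pi_prod {n : ℕ} (μ : Measure ℝ) [SigmaFinite μ]
    (g : Fin n → ℝ → ℝ≥0∞) (hg : ∀ i, Measurable (g i)) :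
    ∫⁻ x : Fin n → ℝ, ∏ i, g i (x i) ∂(Measure.pi fun _ => μ)
      = ∏ i, ∫⁻ x, g i x ∂μ := by
  induction n with
  | zero =>
      simp [lintegral_const, Measure.pi_univ]
  | succ n ih =>
      have hmp := (measurePreserving_piFinSuccAbove (fun _ : Fin (n+1) => μ) 0).symm
      calc ∫⁻ x : Fin (n+1) → ℝ, ∏ i, g i (x i) ∂(Measure.pi fun _ => μ)
          = ∫⁻ p : ℝ × (Fin n → ℝ),
              g 0 p.1 * ∏ i : Fin n, g (Fin.succ i) (p.2 i)
              ∂(μ.prod (Measure.pi fun _ => μ)) := by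
            rw [← hmp.lintegral_comp_emb
              (MeasurableEquiv.piFinSuccAbove (fun _ : Fin (n+1) => ℝ) 0).symm.measurableEmbedding]
            refine lintegral_congr fun p => ?_
            beta_reduce
            simp only [MeasurableEquiv.piFinSuccAbove_symm_apply]
            rw [Fin.prod_univ_succ]
            simp [Fin.insertNthEquiv, Fin.insertNth_zero]
        _ = (∫⁻ x, g 0 x ∂μ) * ∫⁻ y : Fin n → ℝ, ∏ i : Fin n, g (Fin.succ i) (y i)
              ∂(Measure.pi fun _ => μ) :=
            lintegral_prod_mul (f := g 0)
              (g := fun y : Fin n → ℝ => ∏ i : Fin n, g (Fin.succ i) (y i))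
              ((hg 0).aemeasurable)
              ((Finset.measurable_prod _ fun i _ =>
                (hg _).comp (measurable_pi_apply _)).aemeasurable)
        _ = (∫⁻ x, g 0 x ∂μ) * ∏ i : Fin n, ∫⁻ x, g (Fin.succ i) x ∂μ := by
            rw [ih (fun i => g (Fin.succ i)) (fun i => hg _)]
        _ = ∏ i, ∫⁻ x, g i x ∂μ := by rw [Fin.prod_univ_succ]

lemma uniform_prob : ((ENNReal.ofReal (2*π))⁻¹ • volume.restrict (Set.Icc (0:ℝ) (2*π))) Set.univ = 1 := by
  have h2π : (0:ℝ) < 2*π := Real.two_pi_pos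
  simp only [Measure.smul_apply, Measure.restrict_apply MeasurableSet.univ, Set.univ_inter,
    Real.volume_Icc, smul_eq_mul, sub_zero]
  rw [← ENNReal.div_eq_inv_mul, ENNReal.div_self (by simp [Real.pi_pos]) ENNReal.ofReal_ne_top]

lemma lintegral_uniform (h : ℝ → ℝ) (hcont : Continuous h) (hnn : ∀ x, 0 ≤ h x) :
    ∫⁻ x, ENNReal.ofReal (h x) ∂((ENNReal.ofReal (2*π))⁻¹ • volume.restrict (Set.Icc (0:ℝ) (2*π)))
      = ENNReal.ofReal ((2*π)⁻¹ * ∫ x in (0:ℝ)..(2*π), h x) := by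
  have h2π : (0:ℝ) < 2*π := Real.two_pi_pos
  rw [lintegral_smul_measure]
  rw [← ofReal_integral_eq_lintegral_ofReal hcont.integrableOn_Icc (ae_of_all _ hnn)]
  rw [← ENNReal.ofReal_inv_of_pos h2π, smul_eq_mul, ← ENNReal.ofReal_mul (by positivity)]
  congr 1
  rw [intervalIntegral.integral_of_le h2π.le, ← MeasureTheory.integral_Icc_eq_integral_Ioc]

lemma re_term (z : ℂ) (c t : ℝ) :
    (starRingEnd ℂ z * ((c:ℂ) * Complex.exp (Complex.I * t))).re
      = c * (z.re * Real.cos t + z.im * Real.sin t) := by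
  rw [mul_comm Complex.I, Complex.exp_mul_I]
  simp [Complex.mul_re, Complex.mul_im, Complex.cos_ofReal_re, Complex.sin_ofReal_re,
    Complex.cos_ofReal_im, Complex.sin_ofReal_im]
  ring

lemma event_bound (D : ℕ) (hD : 4 ≤ D) (ε : ℝ)
    (hε0 : 0 ≤ ε) (hε1 : ε ≤ 1)
    (φ : EuclideanSpace ℂ (Fin D)) (hφ : ‖φ‖ = 1) (ω : Fin D → ℝ)
    (hmem : ‖φ - (WithLp.equiv 2 (Fin D → ℂ)).symm
        (fun j => ((Real.sqrt D)⁻¹ : ℝ) * Complex.exp (Complex.I * (ω j : ℂ)))‖ ≤ ε) :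
    Real.sqrt D / 2 ≤ ∑ j, ((φ j).re * Real.cos (ω j) + (φ j).im * Real.sin (ω j)) := by
  have hD0 : (0:ℝ) < D := by positivity
  have hsD : (0:ℝ) < Real.sqrt D := Real.sqrt_pos.mpr hD0
  set ψ : EuclideanSpace ℂ (Fin D) := (WithLp.equiv 2 (Fin D → ℂ)).symm
      (fun j => ((Real.sqrt D)⁻¹ : ℝ) * Complex.exp (Complex.I * (ω j : ℂ))) with hψ
  have hψj : ∀ j, ψ j = ((Real.sqrt D)⁻¹ : ℝ) * Complex.exp (Complex.I * (ω j : ℂ)) := by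
    intro j; rw [hψ]; rfl
  have hψnorm : ‖ψ‖ = 1 := by
    rw [EuclideanSpace.norm_eq]
    have : ∀ j, ‖ψ j‖ = (Real.sqrt D)⁻¹ := by
      intro j
      rw [hψj j]
      rw [norm_mul, Complex.norm_real, Complex.norm_exp]
      simp [abs_of_nonneg (inv_nonneg.mpr hsD.le)]
    simp only [this]
    rw [Finset.sum_const, Finset.card_univ, Fintype.card_fin]
    rw [nsmul_eq_mul]
    have h5 : ((Real.sqrt D)⁻¹)^2 = (D:ℝ)⁻¹ := by
      rw [← Real.sqrt_inv, Real.sq_sqrt (inv_nonneg.mpr hD0.le)]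
    rw [h5, mul_inv_cancel₀ hD0.ne', Real.sqrt_one]
  have hinner : (inner ℂ φ ψ : ℂ).re
      = (Real.sqrt D)⁻¹ * ∑ j, ((φ j).re * Real.cos (ω j) + (φ j).im * Real.sin (ω j)) := by
    rw [PiLp.inner_apply]
    rw [Complex.re_sum]
    rw [Finset.mul_sum]
    congr 1
    ext j
    rw [hψj j, RCLike.inner_apply']
    exact re_term (φ j) _ (ω j)
  have hsq : ‖φ - ψ‖^2 = 2 - 2 * (inner ℂ φ ψ : ℂ).re := by
    rw [@norm_sub_sq ℂ, hφ, hψnorm]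
    norm_num
    try ring
  have h1 : ‖φ - ψ‖^2 ≤ 1 := by
    calc ‖φ - ψ‖^2 ≤ ε^2 := by
          apply pow_le_pow_left₀ (norm_nonneg _) hmem
      _ ≤ 1 := by nlinarith
  have h2 : 1/2 ≤ (inner ℂ φ ψ : ℂ).re := by rw [hsq] at h1; linarith
  rw [hinner] at h2
  calc Real.sqrt D / 2 = (Real.sqrt D) * (1/2) := by ring
    _ ≤ Real.sqrt D * ((Real.sqrt D)⁻¹ * ∑ j, ((φ j).re * Real.cos (ω j) + (φ j).im * Real.sin (ω j))) :=
        mul_le_mul_of_nonneg_left h2 hsD.le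
    _ = ∑ j, ((φ j).re * Real.cos (ω j) + (φ j).im * Real.sin (ω j)) := by
        field_simp

end SteinhausAux2

section SteinhausMain
open Real ENNReal

/-- Let `D ≥ 4`, `ε ∈ [0,1]`, and let `ψ ∈ ℂ^D` be random with i.i.d. components uniform on
the circle of radius `D^{-1/2}` (here sampled via i.i.d. uniform phases `ωⱼ ∈ [0, 2π]`), so
that `‖ψ‖ = 1`.  Then for any fixed unit vector `φ ∈ ℂ^D`,
`ℙ[‖φ - ψ‖ ≤ ε] ≤ 4·exp(1 - 3D/16)`. -/
theorem steinhaus_ball_probability_bound (D : ℕ) (hD : 4 ≤ D) (ε : ℝ)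
    (hε0 : 0 ≤ ε) (hε1 : ε ≤ 1)
    (φ : EuclideanSpace ℂ (Fin D)) (hφ : ‖φ‖ = 1) :
    (Measure.pi fun _ : Fin D =>
        (ENNReal.ofReal (2 * Real.pi))⁻¹ • volume.restrict (Set.Icc 0 (2 * Real.pi)))
      {ω : Fin D → ℝ |
        ‖φ - (WithLp.equiv 2 (Fin D → ℂ)).symm
            (fun j => ((Real.sqrt D)⁻¹ : ℝ) * Complex.exp (Complex.I * (ω j : ℂ)))‖ ≤ ε}
      ≤ ENNReal.ofReal (4 * Real.exp (1 - 3 * D / 16)) := by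
  have hD0 : (0:ℝ) < D := by positivity
  have hsD : (0:ℝ) ≤ Real.sqrt D := Real.sqrt_nonneg _
  set μ : Measure ℝ := (ENNReal.ofReal (2*π))⁻¹ • volume.restrict (Set.Icc (0:ℝ) (2*π)) with hμ
  haveI : IsProbabilityMeasure μ := ⟨uniform_prob⟩
  set a : Fin D → ℝ := fun j => Real.sqrt D * (φ j).re with ha
  set b : Fin D → ℝ := fun j => Real.sqrt D * (φ j).im with hb
  set X : Fin D → ℝ → ℝ := fun j t => Real.exp (a j * Real.cos t + b j * Real.sin t) with hX
  have hXnn : ∀ j t, 0 ≤ X j t := fun j t => (Real.exp_pos _).le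
  have hXcont : ∀ j, Continuous (X j) := by
    intro j; apply Real.continuous_exp.comp; fun_prop
  set G : (Fin D → ℝ) → ℝ≥0∞ := fun ω => ∏ j, ENNReal.ofReal (X j (ω j)) with hG
  have hGmeas : Measurable G := by
    apply Finset.measurable_prod
    intro j _
    exact ENNReal.measurable_ofReal.comp ((hXcont j).measurable.comp (measurable_pi_apply j))
  -- norm sum
  have hnormsum : ∑ j, ((φ j).re^2 + (φ j).im^2) = 1 := by
    have h1 : ‖φ‖ = Real.sqrt (∑ j, ‖φ j‖^2) := EuclideanSpace.norm_eq φ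
    rw [hφ] at h1
    have h2 : ∑ j, ‖φ j‖^2 = ∑ j, ((φ j).re^2 + (φ j).im^2) := by
      congr 1; ext j
      rw [Complex.sq_norm, Complex.normSq_apply]; ring
    have h3 : (0:ℝ) ≤ ∑ j, ‖φ j‖^2 := Finset.sum_nonneg fun j _ => sq_nonneg _
    have := Real.sqrt_eq_one.mp h1.symm
    rw [← h2, this]
  -- inclusion
  have hincl : {ω : Fin D → ℝ |
        ‖φ - (WithLp.equiv 2 (Fin D → ℂ)).symm
            (fun j => ((Real.sqrt D)⁻¹ : ℝ) * Complex.exp (Complex.I * (ω j : ℂ)))‖ ≤ ε}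
      ⊆ {ω : Fin D → ℝ | ENNReal.ofReal (Real.exp (D/2)) ≤ G ω} := by
    intro ω hω
    simp only [Set.mem_setOf_eq] at hω ⊢
    have hS := event_bound D hD ε hε0 hε1 φ hφ ω hω
    have hGeq : G ω = ENNReal.ofReal (Real.exp (∑ j, (a j * Real.cos (ω j) + b j * Real.sin (ω j)))) := by
      rw [Real.exp_sum, ENNReal.ofReal_prod_of_nonneg (fun j _ => (Real.exp_pos _).le)]
    rw [hGeq]
    apply ENNReal.ofReal_le_ofReal
    apply Real.exp_le_exp.mpr
    have : ∑ j, (a j * Real.cos (ω j) + b j * Real.sin (ω j))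
        = Real.sqrt D * ∑ j, ((φ j).re * Real.cos (ω j) + (φ j).im * Real.sin (ω j)) := by
      rw [Finset.mul_sum]; congr 1; ext j; rw [ha, hb]; ring
    rw [this]
    have hDsq : Real.sqrt D * Real.sqrt D = (D:ℝ) := Real.mul_self_sqrt hD0.le
    have hh := mul_le_mul_of_nonneg_left hS hsD
    nlinarith [hh]
  -- chernoff
  have hchern := mul_meas_ge_le_lintegral₀ (μ := Measure.pi fun _ : Fin D => μ)
    hGmeas.aemeasurable (ENNReal.ofReal (Real.exp (D/2)))
  -- product bound
  have hprod : ∫⁻ ω, G ω ∂(Measure.pi fun _ : Fin D => μ) ≤ ENNReal.ofReal (Real.exp (D/4)) := by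
    rw [hG, lintegral_pi_prod μ (fun j t => ENNReal.ofReal (X j t))
      (fun j => ENNReal.measurable_ofReal.comp (hXcont j).measurable)]
    calc ∏ j, ∫⁻ t, ENNReal.ofReal (X j t) ∂μ
        ≤ ∏ j, ENNReal.ofReal (Real.exp ((a j^2 + b j^2)/4)) := by
          apply Finset.prod_le_prod'
          intro j _
          rw [lintegral_uniform (X j) (hXcont j) (hXnn j)]
          apply ENNReal.ofReal_le_ofReal
          have hmgf := mgf_phase (a j) (b j)
          have h2π : (0:ℝ) < 2*π := Real.two_pi_pos
          calc (2*π)⁻¹ * ∫ x in (0:ℝ)..(2*π), X j x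
              ≤ (2*π)⁻¹ * (2*π*Real.exp ((a j^2 + b j^2)/4)) := by
                apply mul_le_mul_of_nonneg_left hmgf (by positivity)
            _ = Real.exp ((a j^2 + b j^2)/4) := by field_simp
      _ = ENNReal.ofReal (Real.exp (D/4)) := by
          rw [← ENNReal.ofReal_prod_of_nonneg (fun j _ => (Real.exp_pos _).le)]
          congr 1
          rw [← Real.exp_sum]
          congr 1
          have : ∀ j : Fin D, (a j^2 + b j^2)/4 = (D:ℝ)/4 * ((φ j).re^2 + (φ j).im^2) := by
            intro j
            rw [ha, hb]
            have : Real.sqrt D ^ 2 = (D:ℝ) := Real.sq_sqrt hD0.le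
            nlinarith [this]
          simp only [this]
          rw [← Finset.mul_sum, hnormsum, mul_one]
  -- combine
  have hne0 : ENNReal.ofReal (Real.exp (D/2)) ≠ 0 := by
    simp [Real.exp_pos]
  have hnetop : ENNReal.ofReal (Real.exp (D/2)) ≠ ⊤ := ENNReal.ofReal_ne_top
  calc (Measure.pi fun _ : Fin D => μ) {ω : Fin D → ℝ |
        ‖φ - (WithLp.equiv 2 (Fin D → ℂ)).symm
            (fun j => ((Real.sqrt D)⁻¹ : ℝ) * Complex.exp (Complex.I * (ω j : ℂ)))‖ ≤ ε}
      ≤ (Measure.pi fun _ : Fin D => μ) {ω | ENNReal.ofReal (Real.exp (D/2)) ≤ G ω} :=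
        measure_mono hincl
    _ ≤ (∫⁻ ω, G ω ∂(Measure.pi fun _ : Fin D => μ)) / ENNReal.ofReal (Real.exp (D/2)) := by
        rw [ENNReal.le_div_iff_mul_le (Or.inl hne0) (Or.inl hnetop), mul_comm]
        exact hchern
    _ ≤ ENNReal.ofReal (Real.exp (D/4)) / ENNReal.ofReal (Real.exp (D/2)) := by
        apply ENNReal.div_le_div_right hprod
    _ = ENNReal.ofReal (Real.exp ((D:ℝ)/4 - D/2)) := by
        rw [← ENNReal.ofReal_div_of_pos (Real.exp_pos _), Real.exp_sub]
    _ ≤ ENNReal.ofReal (4 * Real.exp (1 - 3 * D / 16)) := by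
        apply ENNReal.ofReal_le_ofReal
        have h1 : Real.exp ((D:ℝ)/4 - D/2) ≤ Real.exp (1 - 3*D/16) := by
          apply Real.exp_le_exp.mpr
          nlinarith [hD0]
        nlinarith [Real.exp_pos ((1:ℝ) - 3*D/16), h1]
end SteinhausMain
end
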